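/- (Semantic rate-distortion coding theorem, converse part) Let X and X̂ be finite sets, p a probability mass function on X, partitions {X_s : s ∈ S} of X and {X̂_t : t ∈ T} of X̂ with class-index maps s(·) and t(·), d_s : S × T → [0, d_max] a bounded semantic distortion function, and R_s(D) the semantic rate-distortion function. If R < R_s(D), then for any sequence of codes consisting of encoders φ_n : X^n → M_n with |M_n| ≤ 2^{nR} and decoders ψ_n : M_n → X̂^n, the expected semantic distortion E[ (1/n) Σ_{k=1}^n d_s( s(X_k), t(ψ_n(φ_n(X^n))_k) ) ] exceeds D for all sufficiently large n, where X_1,...,X_n are i.i.d. with distribution p. -/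

import Mathlib

open Finset
open scoped Classical

/-- Probability of a class of the partition induced by a class-index map `c`:
`P(U_s) = Σ_{u ∈ U_s} p u`. -/
noncomputable def Pclass {U S : Type*} [Fintype U] (p : U → ℝ) (c : U → S) (s : S) : ℝ :=
  ∑ u : U, if c u = s then p u else 0

/-- Semantic entropy `H_s(Ũ) = −Σ_s P(U_s) log₂ P(U_s)`. -/
noncomputable def semEntropy {U S : Type*} [Fintype U] [Fintype S]
    (p : U → ℝ) (c : U → S) : ℝ :=
  -∑ s : S, Pclass p c s * Real.logb 2 (Pclass p c s)

/-- Shannon entropy `H(U) = −Σ_u p(u) log₂ p(u)`. -/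
noncomputable def shEntropy {U : Type*} [Fintype U] (p : U → ℝ) : ℝ :=
  -∑ u : U, p u * Real.logb 2 (p u)

/-- Probability of a product class `P(U_s × V_t) = Σ_{u∈U_s} Σ_{v∈V_t} p(u,v)`. -/
noncomputable def PjointClass {U V S T : Type*} [Fintype U] [Fintype V]
    (p : U → V → ℝ) (cU : U → S) (cV : V → T) (s : S) (t : T) : ℝ :=
  ∑ u : U, ∑ v : V, if cU u = s ∧ cV v = t then p u v else 0

/-- Semantic joint entropy `H_s(Ũ,Ṽ) = −Σ_{s,t} P(U_s × V_t) log₂ P(U_s × V_t)`. -/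
noncomputable def semJointEntropy {U V S T : Type*} [Fintype U] [Fintype V] [Fintype S] [Fintype T]
    (p : U → V → ℝ) (cU : U → S) (cV : V → T) : ℝ :=
  -∑ s : S, ∑ t : T, PjointClass p cU cV s t * Real.logb 2 (PjointClass p cU cV s t)

/-- Shannon joint entropy `H(U,V) = −Σ_{u,v} p(u,v) log₂ p(u,v)`. -/
noncomputable def shJointEntropy {U V : Type*} [Fintype U] [Fintype V] (p : U → V → ℝ) : ℝ :=
  -∑ u : U, ∑ v : V, p u v * Real.logb 2 (p u v)

/-- Marginal `p(u) = Σ_v p(u,v)`. -/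
noncomputable def margU {U V : Type*} [Fintype V] (p : U → V → ℝ) (u : U) : ℝ :=
  ∑ v : V, p u v

/-- Marginal `p(v) = Σ_u p(u,v)`. -/
noncomputable def margV {U V : Type*} [Fintype U] (p : U → V → ℝ) (v : V) : ℝ :=
  ∑ u : U, p u v

/-- `p(U_s, v) = Σ_{u ∈ U_s} p(u,v)`. -/
noncomputable def PclassU {U V S : Type*} [Fintype U]
    (p : U → V → ℝ) (cU : U → S) (s : S) (v : V) : ℝ :=
  ∑ u : U, if cU u = s then p u v else 0

/-- `p(u, V_t) = Σ_{v ∈ V_t} p(u,v)`. -/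
noncomputable def PclassV {U V T : Type*} [Fintype V]
    (p : U → V → ℝ) (cV : V → T) (u : U) (t : T) : ℝ :=
  ∑ v : V, if cV v = t then p u v else 0

/-- Semantic conditional entropy
`H_s(Ũ|V) = −Σ_v Σ_s p(U_s, v) log₂ (p(U_s, v)/p(v))` (terms with `p(v) = 0` vanish). -/
noncomputable def semCondEntropyU {U V S : Type*} [Fintype U] [Fintype V] [Fintype S]
    (p : U → V → ℝ) (cU : U → S) : ℝ :=
  -∑ v : V, ∑ s : S, PclassU p cU s v * Real.logb 2 (PclassU p cU s v / margV p v)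

/-- Semantic conditional entropy
`H_s(Ṽ|U) = −Σ_u Σ_t p(u, V_t) log₂ (p(u, V_t)/p(u))` (terms with `p(u) = 0` vanish). -/
noncomputable def semCondEntropyV {U V T : Type*} [Fintype U] [Fintype V] [Fintype T]
    (p : U → V → ℝ) (cV : V → T) : ℝ :=
  -∑ u : U, ∑ t : T, PclassV p cV u t * Real.logb 2 (PclassV p cV u t / margU p u)

/-- Shannon conditional entropy `H(U|V) = −Σ_{u,v} p(u,v) log₂ (p(u,v)/p(v))`
(terms with `p(v) = 0` vanish). -/
noncomputable def shCondEntropyU {U V : Type*} [Fintype U] [Fintype V] (p : U → V → ℝ) : ℝ :=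
  -∑ u : U, ∑ v : V, p u v * Real.logb 2 (p u v / margV p v)

/-- Mutual information `I(U;V) = H(U) + H(V) − H(U,V)`. -/
noncomputable def mutualInfo {U V : Type*} [Fintype U] [Fintype V] (p : U → V → ℝ) : ℝ :=
  shEntropy (margU p) + shEntropy (margV p) - shJointEntropy p

/-- Down semantic mutual information `I_s(Ũ;Ṽ) = H_s(Ũ) + H_s(Ṽ) − H(U,V)`. -/
noncomputable def downSMI {U V S T : Type*} [Fintype U] [Fintype V] [Fintype S] [Fintype T]
    (p : U → V → ℝ) (cU : U → S) (cV : V → T) : ℝ :=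
  semEntropy (margU p) cU + semEntropy (margV p) cV - shJointEntropy p

/-- Up semantic mutual information `I^s(Ũ;Ṽ) = H(U) + H(V) − H_s(Ũ,Ṽ)`. -/
noncomputable def upSMI {U V S T : Type*} [Fintype U] [Fintype V] [Fintype S] [Fintype T]
    (p : U → V → ℝ) (cU : U → S) (cV : V → T) : ℝ :=
  shEntropy (margU p) + shEntropy (margV p) - semJointEntropy p cU cV

/-- A test channel: a conditional pmf `q(x̂|x)`. -/
def IsTestChannel {X Xhat : Type*} [Fintype Xhat] (q : X → Xhat → ℝ) : Prop :=
  (∀ x xh, 0 ≤ q x xh) ∧ ∀ x, ∑ xh : Xhat, q x xh = 1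

/-- The semantic rate-distortion function
`R_s(D) = min { I_s(X̃;X̂̃) : q a test channel with E[d_s] ≤ D }`, where all quantities are
computed from the joint distribution `r(x,x̂) = p(x) q(x̂|x)` and the expected semantic
distortion is `Σ_{x,x̂} r(x,x̂) d_s(s(x), t(x̂))`. -/
noncomputable def semRateDistortion {X Xhat S T : Type*}
    [Fintype X] [Fintype Xhat] [Fintype S] [Fintype T]
    (p : X → ℝ) (cX : X → S) (cT : Xhat → T) (d : S → T → ℝ) (D : ℝ) : ℝ :=
  sInf {r : ℝ | ∃ q : X → Xhat → ℝ, IsTestChannel q ∧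
      (∑ x : X, ∑ xh : Xhat, p x * q x xh * d (cX x) (cT xh)) ≤ D ∧
      r = downSMI (fun x xh => p x * q x xh) cX cT}


/-!
If a code of rate at most `R` had expected distortion at most `D` at some block length `n ≥ 1`,
average the joint laws of the letter pairs `(X_k, X̂_k)`: the average has input marginal `p` and
expected distortion at most `D`, so its down semantic mutual information is at least `R_s(D)`.
Semantic entropies never exceed Shannon entropies, so `I_s ≤ I`; mutual information is convex in
the channel for a fixed input law, so `I` of the average is at most the average of the
`I(X_k; X̂_k)`; and writing `ρ_k = r_k / (p ⊗ r_{k,X̂})` for the density ratios, Jensen gives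
`∑ₖ I(X_k; X̂_k) = E[log ∏ₖ ρ_k] ≤ log E[∏ₖ ρ_k] ≤ log M ≤ nR`, because for each of the at most
`M ≤ 2^{nR}` codewords `y` one has `∑ₓ ∏ₖ p(x_k) ρ_k(x_k, y_k) ≤ 1`. Hence `R_s(D) ≤ R`.
-/

open Real

theorem sub_div_log_two_le_mul_logb_div {a b : ℝ} (ha : 0 ≤ a) (hb : 0 ≤ b) (hab : a ≠ 0 → b ≠ 0) :
    (a - b) / log 2 ≤ a * logb 2 (a / b) := by
  have hlog2 : 0 < log 2 := log_pos one_lt_two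
  rcases ha.eq_or_lt with rfl | ha
  · simpa using div_nonpos_of_nonpos_of_nonneg (neg_nonpos.2 hb) hlog2.le
  have hb : 0 < b := hb.lt_of_ne' (hab ha.ne')
  have key : a - b ≤ a * log (a / b) := by
    have := mul_le_mul_of_nonneg_left (log_le_sub_one_of_pos (div_pos hb ha)) ha.le
    have hba : a * (b / a - 1) = b - a := by field_simp
    rw [← inv_div b a, log_inv]
    linarith
  rw [logb, ← mul_div_assoc]
  gcongr

theorem sum_mul_logb_div_nonneg {ι : Type*} [Fintype ι] {a b : ι → ℝ} (ha : ∀ i, 0 ≤ a i)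
    (hb : ∀ i, 0 ≤ b i) (hab : ∀ i, a i ≠ 0 → b i ≠ 0) (hsum : ∑ i, b i ≤ ∑ i, a i) :
    0 ≤ ∑ i, a i * logb 2 (a i / b i) :=
  calc 0 ≤ (∑ i, a i - ∑ i, b i) / log 2 := div_nonneg (sub_nonneg.2 hsum) (log_pos one_lt_two).le
    _ = ∑ i, (a i - b i) / log 2 := by rw [← Finset.sum_sub_distrib, Finset.sum_div]
    _ ≤ _ := Finset.sum_le_sum fun i _ => sub_div_log_two_le_mul_logb_div (ha i) (hb i) (hab i)

theorem sum_mul_logb_le_logb_of_sum_mul_le {ι : Type*} [Fintype ι] {w z : ι → ℝ} {M : ℝ}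
    (hw : ∀ i, 0 ≤ w i) (hw1 : ∑ i, w i = 1) (hz : ∀ i, 0 ≤ z i) (hwz : ∀ i, w i ≠ 0 → z i ≠ 0)
    (hM : ∑ i, w i * z i ≤ M) :
    ∑ i, w i * logb 2 (z i) ≤ logb 2 M := by
  set E := ∑ i, w i * z i
  have hE : 0 < E := by
    obtain ⟨i, hi⟩ : ∃ i, w i ≠ 0 := by
      by_contra! h
      simp [h] at hw1
    exact (mul_pos ((hw i).lt_of_ne' hi) ((hz i).lt_of_ne' (hwz i hi))).trans_le
      (Finset.single_le_sum (fun j _ => mul_nonneg (hw j) (hz j)) (Finset.mem_univ i))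
  have gibbs := sum_mul_logb_div_nonneg hw (b := fun i => w i * z i / E)
    (fun i => div_nonneg (mul_nonneg (hw i) (hz i)) hE.le)
    (fun i hi => div_ne_zero (mul_ne_zero hi (hwz i hi)) hE.ne')
    (by rw [← Finset.sum_div, div_self hE.ne', hw1])
  have expand : ∀ i,
      w i * logb 2 (w i / (w i * z i / E)) = w i * logb 2 E - w i * logb 2 (z i) := by
    intro i
    by_cases hi : w i = 0
    · simp [hi]
    · rw [div_div_eq_mul_div, mul_div_mul_left _ _ hi, logb_div hE.ne' (hwz i hi), mul_sub]
  simp only [expand, Finset.sum_sub_distrib, ← Finset.sum_mul, hw1, one_mul] at gibbs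
  linarith [logb_le_logb_of_le one_lt_two hE hM]

theorem sum_comp_le_sum_image {α β : Type*} [Fintype α] [DecidableEq β] (g : α → β)
    {F : α → β → ℝ} (hF : ∀ x y, 0 ≤ F x y) :
    ∑ x, F x (g x) ≤ ∑ y ∈ Finset.univ.image g, ∑ x, F x y := by
  rw [← Finset.sum_fiberwise_of_maps_to (fun x _ => Finset.mem_image_of_mem g (Finset.mem_univ x))]
  refine Finset.sum_le_sum fun y _ => ?_
  calc ∑ x with g x = y, F x (g x) = ∑ x with g x = y, F x y :=
        Finset.sum_congr rfl fun x hx => by rw [(Finset.mem_filter.1 hx).2]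
    _ ≤ ∑ x, F x y :=
        Finset.sum_le_sum_of_subset_of_nonneg (Finset.filter_subset _ _) fun x _ _ => hF x y

theorem card_image_comp_le {α M β : Type*} [Fintype α] [Fintype M] [DecidableEq β] (φ : α → M)
    (ψ : M → β) : (Finset.univ.image fun x => ψ (φ x)).card ≤ Fintype.card M :=
  calc (Finset.univ.image fun x => ψ (φ x)).card = ((Finset.univ.image φ).image ψ).card := by
        rw [Finset.image_image]
        rfl
    _ ≤ Fintype.card M := Finset.card_image_le.trans (Finset.card_le_univ _)

section Entropy

variable {U S : Type*} [Fintype U] {q : U → ℝ}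

theorem sum_Pclass_mul [Fintype S] (c : U → S) (F : S → ℝ) :
    ∑ s, Pclass q c s * F s = ∑ u, q u * F (c u) := by
  simp only [Pclass, Finset.sum_mul, ite_mul, zero_mul]
  rw [Finset.sum_comm]
  simp

theorem Pclass_nonneg (hq : ∀ u, 0 ≤ q u) (c : U → S) (s : S) : 0 ≤ Pclass q c s :=
  Finset.sum_nonneg fun u _ => by split_ifs <;> simp [hq u]

theorem Pclass_le_sum (hq : ∀ u, 0 ≤ q u) (c : U → S) (s : S) : Pclass q c s ≤ ∑ u, q u :=
  Finset.sum_le_sum fun u _ => by split_ifs <;> simp [hq u]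

theorem le_Pclass (hq : ∀ u, 0 ≤ q u) (c : U → S) (u : U) : q u ≤ Pclass q c (c u) := by
  simpa [Pclass] using Finset.single_le_sum (f := fun u' => if c u' = c u then q u' else 0)
    (fun u' _ => by split_ifs <;> simp [hq u']) (Finset.mem_univ u)

theorem semEntropy_le_shEntropy [Fintype S] (hq : ∀ u, 0 ≤ q u) (c : U → S) :
    semEntropy q c ≤ shEntropy q := by
  rw [semEntropy, shEntropy, neg_le_neg_iff, sum_Pclass_mul]
  refine Finset.sum_le_sum fun u _ => ?_
  rcases (hq u).eq_or_lt with h | h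
  · simp [← h]
  · exact mul_le_mul_of_nonneg_left (logb_le_logb_of_le one_lt_two h (le_Pclass hq c u)) h.le

theorem semEntropy_nonneg [Fintype S] (hq : ∀ u, 0 ≤ q u) (hq1 : ∑ u, q u ≤ 1) (c : U → S) :
    0 ≤ semEntropy q c := by
  rw [semEntropy, neg_nonneg]
  refine Finset.sum_nonpos fun s _ => ?_
  have h0 := Pclass_nonneg hq c s
  exact mul_nonpos_of_nonneg_of_nonpos h0
    (logb_nonpos one_lt_two h0 ((Pclass_le_sum hq c s).trans hq1))

end Entropy

section MutualInfo

variable {U V : Type*} {r : U → V → ℝ}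

theorem margU_nonneg [Fintype V] (hr : ∀ u v, 0 ≤ r u v) (u : U) : 0 ≤ margU r u :=
  Finset.sum_nonneg fun v _ => hr u v

theorem margV_nonneg [Fintype U] (hr : ∀ u v, 0 ≤ r u v) (v : V) : 0 ≤ margV r v :=
  Finset.sum_nonneg fun u _ => hr u v

theorem le_margU [Fintype V] (hr : ∀ u v, 0 ≤ r u v) (u : U) (v : V) : r u v ≤ margU r u :=
  Finset.single_le_sum (fun v' _ => hr u v') (Finset.mem_univ v)

theorem le_margV [Fintype U] (hr : ∀ u v, 0 ≤ r u v) (u : U) (v : V) : r u v ≤ margV r v :=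
  Finset.single_le_sum (fun u' _ => hr u' v) (Finset.mem_univ u)

theorem margU_average [Fintype V] {ι : Type*} [Fintype ι] [Nonempty ι] {r : ι → U → V → ℝ}
    {μ : U → ℝ} (hμ : ∀ k, margU (r k) = μ) :
    margU (fun u v => (∑ k, r k u v) / (Fintype.card ι : ℝ)) = μ := funext fun u => by
  have hμu : ∀ k, ∑ v, r k u v = μ u := fun k => congrFun (hμ k) u
  simp only [margU, ← Finset.sum_div]
  rw [Finset.sum_comm]
  simp only [hμu, Finset.sum_const, Finset.card_univ, nsmul_eq_mul]
  exact mul_div_cancel_left₀ _ (Nat.cast_pos.2 Fintype.card_pos).ne'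

variable [Fintype U] [Fintype V]

noncomputable def densityRatio (r : U → V → ℝ) (u : U) (v : V) : ℝ :=
  r u v / (margU r u * margV r v)

theorem densityRatio_pos (hr : ∀ u v, 0 ≤ r u v) {u : U} {v : V} (h : r u v ≠ 0) :
    0 < densityRatio r u v := by
  have h := (hr u v).lt_of_ne' h
  exact div_pos h (mul_pos (h.trans_le (le_margU hr u v)) (h.trans_le (le_margV hr u v)))

theorem densityRatio_nonneg (hr : ∀ u v, 0 ≤ r u v) (u : U) (v : V) : 0 ≤ densityRatio r u v :=
  div_nonneg (hr u v) (mul_nonneg (margU_nonneg hr u) (margV_nonneg hr v))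

theorem mutualInfo_eq_sum_mul_logb_densityRatio (hr : ∀ u v, 0 ≤ r u v) :
    mutualInfo r = ∑ u, ∑ v, r u v * logb 2 (densityRatio r u v) := by
  have expand : ∀ u v, r u v * logb 2 (densityRatio r u v) = r u v * logb 2 (r u v)
      - r u v * logb 2 (margU r u) - r u v * logb 2 (margV r v) := by
    intro u v
    rcases (hr u v).eq_or_lt with h | h
    · simp [← h]
    · rw [densityRatio, logb_div h.ne' (mul_pos (h.trans_le (le_margU hr u v))
        (h.trans_le (le_margV hr u v))).ne', logb_mul (h.trans_le (le_margU hr u v)).ne'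
        (h.trans_le (le_margV hr u v)).ne']
      ring
  have hU : ∑ u, margU r u * logb 2 (margU r u) = ∑ u, ∑ v, r u v * logb 2 (margU r u) :=
    Finset.sum_congr rfl fun u _ => Finset.sum_mul _ _ _
  have hV : ∑ v, margV r v * logb 2 (margV r v) = ∑ u, ∑ v, r u v * logb 2 (margV r v) := by
    rw [Finset.sum_comm]
    exact Finset.sum_congr rfl fun v _ => Finset.sum_mul _ _ _
  simp only [mutualInfo, shEntropy, shJointEntropy, expand, Finset.sum_sub_distrib, hU, hV]
  ring

theorem sum_margU_mul_densityRatio_le_one (hr : ∀ u v, 0 ≤ r u v) (v : V) :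
    ∑ u, margU r u * densityRatio r u v ≤ 1 :=
  calc ∑ u, margU r u * densityRatio r u v ≤ ∑ u, r u v / margV r v := by
        refine Finset.sum_le_sum fun u _ => ?_
        rcases (margU_nonneg hr u).eq_or_lt with h | h
        · rw [← h, zero_mul]
          exact div_nonneg (hr u v) (margV_nonneg hr v)
        · rw [densityRatio, mul_div_assoc', mul_div_mul_left _ _ h.ne']
    _ = margV r v / margV r v := by rw [← Finset.sum_div]; rfl
    _ ≤ 1 := div_self_le_one _

theorem densityRatio_div_densityRatio {r' : U → V → ℝ} (hr : ∀ u v, 0 ≤ r u v)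
    (hr' : ∀ u v, 0 ≤ r' u v) (hmarg : margU r' = margU r) {u : U} {v : V} (h : r u v ≠ 0)
    (h' : r' u v ≠ 0) :
    densityRatio r u v / densityRatio r' u v = r u v / (r' u v * margV r v / margV r' v) := by
  have hU := ((hr u v).lt_of_ne' h).trans_le (le_margU hr u v)
  have hV := ((hr u v).lt_of_ne' h).trans_le (le_margV hr u v)
  have hV' := ((hr' u v).lt_of_ne' h').trans_le (le_margV hr' u v)
  rw [densityRatio, densityRatio, hmarg]
  field_simp

theorem sum_mul_logb_densityRatio_le_mutualInfo {r' : U → V → ℝ} (hr : ∀ u v, 0 ≤ r u v)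
    (hr' : ∀ u v, 0 ≤ r' u v) (hmarg : margU r' = margU r)
    (hsupp : ∀ u v, r u v ≠ 0 → r' u v ≠ 0) :
    ∑ u, ∑ v, r u v * logb 2 (densityRatio r' u v) ≤ mutualInfo r := by
  set b : U × V → ℝ := fun z => r' z.1 z.2 * margV r z.2 / margV r' z.2
  have hsum : ∑ z, b z ≤ ∑ z : U × V, r z.1 z.2 := by
    rw [Fintype.sum_prod_type, Fintype.sum_prod_type, Finset.sum_comm,
      Finset.sum_comm (f := fun u v => r u v)]
    refine Finset.sum_le_sum fun v _ => ?_
    simp only [b, ← Finset.sum_div, ← Finset.sum_mul]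
    change margV r' v * margV r v / margV r' v ≤ margV r v
    rcases (margV_nonneg hr' v).eq_or_lt with h | h
    · simpa [← h] using margV_nonneg hr v
    · rw [mul_div_cancel_left₀ _ h.ne']
  have hsupp_b : ∀ z : U × V, r z.1 z.2 ≠ 0 → b z ≠ 0 := fun ⟨u, v⟩ h => by
    have h' := (hr' u v).lt_of_ne' (hsupp u v h)
    have h := (hr u v).lt_of_ne' h
    exact (div_pos (mul_pos h' (h.trans_le (le_margV hr u v)))
      (h'.trans_le (le_margV hr' u v))).ne'
  have gibbs := sum_mul_logb_div_nonneg (a := fun z : U × V => r z.1 z.2) (fun z => hr z.1 z.2)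
    (fun z => div_nonneg (mul_nonneg (hr' _ _) (margV_nonneg hr _)) (margV_nonneg hr' _))
    hsupp_b hsum
  have expand : ∀ u v, r u v * logb 2 (r u v / (r' u v * margV r v / margV r' v))
      = r u v * logb 2 (densityRatio r u v) - r u v * logb 2 (densityRatio r' u v) := by
    intro u v
    by_cases h : r u v = 0
    · simp [h]
    rw [← mul_sub, ← logb_div (densityRatio_pos hr h).ne' (densityRatio_pos hr' (hsupp u v h)).ne',
      densityRatio_div_densityRatio hr hr' hmarg h (hsupp u v h)]
  rw [Fintype.sum_prod_type] at gibbs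
  simp only [expand, Finset.sum_sub_distrib] at gibbs
  rw [mutualInfo_eq_sum_mul_logb_densityRatio hr]
  linarith

theorem mutualInfo_average_le {ι : Type*} [Fintype ι] [Nonempty ι] {r : ι → U → V → ℝ}
    (hr : ∀ k u v, 0 ≤ r k u v) {μ : U → ℝ} (hμ : ∀ k, margU (r k) = μ) :
    mutualInfo (fun u v => (∑ k, r k u v) / (Fintype.card ι : ℝ))
      ≤ (∑ k, mutualInfo (r k)) / Fintype.card ι := by
  set N : ℝ := (Fintype.card ι : ℝ)
  have hN : 0 < N := Nat.cast_pos.2 Fintype.card_pos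
  set rbar : U → V → ℝ := fun u v => (∑ k, r k u v) / N
  have hrbar : ∀ u v, 0 ≤ rbar u v := fun u v =>
    div_nonneg (Finset.sum_nonneg fun k _ => hr k u v) hN.le
  have hmarg : margU rbar = μ := margU_average hμ
  have hsupp : ∀ k u v, r k u v ≠ 0 → rbar u v ≠ 0 := fun k u v h =>
    (div_pos (((hr k u v).lt_of_ne' h).trans_le
      (Finset.single_le_sum (fun k' _ => hr k' u v) (Finset.mem_univ k))) hN).ne'
  rw [le_div_iff₀ hN, mutualInfo_eq_sum_mul_logb_densityRatio hrbar]
  calc (∑ u, ∑ v, rbar u v * logb 2 (densityRatio rbar u v)) * N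
      = ∑ u, ∑ v, ∑ k, r k u v * logb 2 (densityRatio rbar u v) := by
        simp only [Finset.sum_mul]
        refine Finset.sum_congr rfl fun u _ => Finset.sum_congr rfl fun v _ => ?_
        simp only [rbar, ← Finset.sum_mul]
        field_simp
    _ = ∑ k, ∑ u, ∑ v, r k u v * logb 2 (densityRatio rbar u v) :=
        (Finset.sum_congr rfl fun u _ => Finset.sum_comm).trans Finset.sum_comm
    _ ≤ ∑ k, mutualInfo (r k) := Finset.sum_le_sum fun k _ =>
        sum_mul_logb_densityRatio_le_mutualInfo (hr k) hrbar (hmarg.trans (hμ k).symm)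
          (hsupp k)

theorem downSMI_le_mutualInfo {S T : Type*} [Fintype S] [Fintype T] (hr : ∀ u v, 0 ≤ r u v)
    (cU : U → S) (cV : V → T) : downSMI r cU cV ≤ mutualInfo r := by
  have := semEntropy_le_shEntropy (margU_nonneg hr) cU
  have := semEntropy_le_shEntropy (margV_nonneg hr) cV
  rw [downSMI, mutualInfo]
  linarith

theorem shJointEntropy_le (hr : ∀ u v, 0 ≤ r u v) :
    shJointEntropy r ≤ Fintype.card U * Fintype.card V / log 2 := by
  have hterm : ∀ u v, -(r u v * logb 2 (r u v)) ≤ 1 / log 2 := fun u v => by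
    have h := sub_div_log_two_le_mul_logb_div (hr u v) zero_le_one fun _ => one_ne_zero
    have := div_nonneg (hr u v) (log_pos one_lt_two).le
    rw [div_one, sub_div] at h
    linarith
  calc shJointEntropy r = ∑ u, ∑ v, -(r u v * logb 2 (r u v)) := by
        simp only [shJointEntropy, Finset.sum_neg_distrib]
    _ ≤ ∑ u : U, ∑ v : V, 1 / log 2 :=
        Finset.sum_le_sum fun u _ => Finset.sum_le_sum fun v _ => hterm u v
    _ = Fintype.card U * Fintype.card V / log 2 := by
        simp only [Finset.sum_const, Finset.card_univ, nsmul_eq_mul]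
        ring

theorem neg_card_mul_card_div_le_downSMI {S T : Type*} [Fintype S] [Fintype T]
    (hr : ∀ u v, 0 ≤ r u v) (hr1 : ∑ u, ∑ v, r u v = 1) (cU : U → S) (cV : V → T) :
    -(Fintype.card U * Fintype.card V / log 2) ≤ downSMI r cU cV := by
  have := semEntropy_nonneg (margU_nonneg hr) hr1.le cU
  have := semEntropy_nonneg (margV_nonneg hr) (by rw [← hr1]; exact Finset.sum_comm.le) cV
  have := shJointEntropy_le hr
  rw [downSMI]
  linarith

end MutualInfo

section RateDistortion

variable {X Xhat S T : Type*} [Fintype Xhat]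

theorem exists_isTestChannel_mul_eq [Nonempty Xhat] {p : X → ℝ} {r : X → Xhat → ℝ}
    (hr : ∀ a b, 0 ≤ r a b) (hrp : margU r = p) :
    ∃ q, IsTestChannel q ∧ (fun a b => p a * q a b) = r := by
  subst hrp
  refine ⟨fun a b => if margU r a = 0 then (Fintype.card Xhat : ℝ)⁻¹ else r a b / margU r a,
    ⟨fun a b => ?_, fun a => ?_⟩, funext₂ fun a b => ?_⟩ <;> dsimp only
  · split_ifs
    · positivity
    · exact div_nonneg (hr a b) (margU_nonneg hr a)
  · split_ifs with h
    · simp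
    · rw [← Finset.sum_div]
      exact div_self h
  · split_ifs with h
    · rw [h, zero_mul]
      exact (le_antisymm (h ▸ le_margU hr a b) (hr a b)).symm
    · exact mul_div_cancel₀ _ h

theorem semRateDistortion_le_downSMI [Fintype X] [Fintype S] [Fintype T] [Nonempty Xhat] {p : X → ℝ}
    (hp0 : ∀ x, 0 ≤ p x) (hp1 : ∑ x, p x = 1) (cX : X → S) (cT : Xhat → T) (d : S → T → ℝ)
    {D : ℝ} {r : X → Xhat → ℝ} (hr : ∀ a b, 0 ≤ r a b) (hrp : margU r = p)
    (hrD : ∑ a, ∑ b, r a b * d (cX a) (cT b) ≤ D) :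
    semRateDistortion p cX cT d D ≤ downSMI r cX cT := by
  obtain ⟨q, hq, rfl⟩ := exists_isTestChannel_mul_eq hr hrp
  refine csInf_le ⟨-(Fintype.card X * Fintype.card Xhat / log 2), ?_⟩ ⟨q, hq, hrD, rfl⟩
  rintro _ ⟨q', ⟨hq0, hq1⟩, -, rfl⟩
  refine neg_card_mul_card_div_le_downSMI (fun a b => mul_nonneg (hp0 a) (hq0 a b)) ?_ cX cT
  simp [← Finset.mul_sum, hq1, hp1]

end RateDistortion

section BlockCode

variable {X Y : Type*} [Fintype X] {n : ℕ} {p : X → ℝ}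

-- The joint law of `(X_k, X̂_k)` for `X` i.i.d. with law `p` and `X̂ = g X`: `Pclass P c` is the
-- law of `c` under `P`.
noncomputable def letterLaw (p : X → ℝ) (g : (Fin n → X) → Fin n → Y) (k : Fin n) (a : X)
    (b : Y) : ℝ :=
  Pclass (fun x => ∏ j, p (x j)) (fun x => (x k, g x k)) (a, b)

theorem sum_prod_eq_one (hp1 : ∑ a, p a = 1) : ∑ x : Fin n → X, ∏ j, p (x j) = 1 := by
  rw [← Fintype.prod_sum (fun _ => p)]
  simp [hp1]

theorem Pclass_prod_eval (hp1 : ∑ a, p a = 1) (k : Fin n) :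
    Pclass (fun x : Fin n → X => ∏ j, p (x j)) (fun x => x k) = p := funext fun a => by
  have hfac : ∀ x : Fin n → X, (if x k = a then ∏ j, p (x j) else 0)
      = ∏ j, if j = k ∧ x j ≠ a then 0 else p (x j) := by
    intro x
    by_cases hx : x k = a
    · rw [if_pos hx]
      refine Finset.prod_congr rfl fun j _ => (if_neg ?_).symm
      rintro ⟨rfl, h⟩
      exact h hx
    · rw [if_neg hx]
      exact (Finset.prod_eq_zero (Finset.mem_univ k) (if_pos ⟨rfl, hx⟩ : _ = (0 : ℝ))).symm
  simp only [Pclass, hfac]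
  rw [← Fintype.prod_sum (fun j c => if j = k ∧ c ≠ a then 0 else p c),
    Fintype.prod_eq_single k fun j hj => by simp [hj, hp1]]
  simp

variable (g : (Fin n → X) → Fin n → Y)

theorem letterLaw_nonneg (hp0 : ∀ a, 0 ≤ p a) (k : Fin n) (a : X) (b : Y) :
    0 ≤ letterLaw p g k a b :=
  Pclass_nonneg (fun x => Finset.prod_nonneg fun j _ => hp0 (x j)) _ _

theorem prod_le_letterLaw (hp0 : ∀ a, 0 ≤ p a) (k : Fin n) (x : Fin n → X) :
    ∏ j, p (x j) ≤ letterLaw p g k (x k) (g x k) :=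
  le_Pclass (fun x => Finset.prod_nonneg fun j _ => hp0 (x j)) (fun x => (x k, g x k)) x

theorem sum_letterLaw_mul [Fintype Y] (k : Fin n) (F : X → Y → ℝ) :
    ∑ a, ∑ b, letterLaw p g k a b * F a b = ∑ x, (∏ j, p (x j)) * F (x k) (g x k) := by
  rw [← Fintype.sum_prod_type']
  exact sum_Pclass_mul _ fun z : X × Y => F z.1 z.2

theorem margU_letterLaw [Fintype Y] (hp1 : ∑ a, p a = 1) (k : Fin n) :
    margU (letterLaw p g k) = p := by
  funext a
  refine Eq.trans ?_ (congrFun (Pclass_prod_eval hp1 k) a)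
  simp only [margU, letterLaw, Pclass]
  rw [Finset.sum_comm]
  simp [Prod.ext_iff, ite_and]

theorem sum_mutualInfo_letterLaw_le [Fintype Y] (hp0 : ∀ a, 0 ≤ p a) (hp1 : ∑ a, p a = 1) :
    ∑ k, mutualInfo (letterLaw p g k) ≤ logb 2 (Finset.univ.image g).card := by
  have hP0 : ∀ x : Fin n → X, 0 ≤ ∏ j, p (x j) := fun x =>
    Finset.prod_nonneg fun j _ => hp0 (x j)
  have hL0 := letterLaw_nonneg g hp0
  have hρ : ∀ x : Fin n → X, ∏ j, p (x j) ≠ 0 → ∀ k,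
      0 < densityRatio (letterLaw p g k) (x k) (g x k) := fun x hx k =>
    densityRatio_pos (hL0 k) (((hP0 x).lt_of_ne' hx).trans_le (prod_le_letterLaw g hp0 k x)).ne'
  have hI : ∑ k, mutualInfo (letterLaw p g k) = ∑ x, (∏ j, p (x j)) *
      logb 2 (∏ k, densityRatio (letterLaw p g k) (x k) (g x k)) := by
    simp only [mutualInfo_eq_sum_mul_logb_densityRatio (hL0 _), sum_letterLaw_mul]
    rw [Finset.sum_comm]
    refine Finset.sum_congr rfl fun x _ => ?_
    by_cases hx : ∏ j, p (x j) = 0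
    · simp [hx]
    · rw [← Finset.mul_sum, logb_prod _ _ fun k _ => (hρ x hx k).ne']
  rw [hI]
  have hz0 : ∀ x : Fin n → X, 0 ≤ ∏ k, densityRatio (letterLaw p g k) (x k) (g x k) :=
    fun x => Finset.prod_nonneg fun k _ => densityRatio_nonneg (hL0 k) _ _
  have hz : ∀ x : Fin n → X, ∏ j, p (x j) ≠ 0 →
      ∏ k, densityRatio (letterLaw p g k) (x k) (g x k) ≠ 0 :=
    fun x hx => (Finset.prod_pos fun k _ => hρ x hx k).ne'
  refine sum_mul_logb_le_logb_of_sum_mul_le hP0 (sum_prod_eq_one (n := n) hp1) hz0 hz ?_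
  calc ∑ x, (∏ j, p (x j)) * ∏ k, densityRatio (letterLaw p g k) (x k) (g x k)
      = ∑ x, ∏ k, p (x k) * densityRatio (letterLaw p g k) (x k) (g x k) := by
        simp only [Finset.prod_mul_distrib]
    _ ≤ ∑ y ∈ Finset.univ.image g, ∑ x : Fin n → X,
          ∏ k, p (x k) * densityRatio (letterLaw p g k) (x k) (y k) :=
        sum_comp_le_sum_image g
          (F := fun x y => ∏ k, p (x k) * densityRatio (letterLaw p g k) (x k) (y k))
          fun x y => Finset.prod_nonneg fun k _ =>
            mul_nonneg (hp0 _) (densityRatio_nonneg (hL0 k) _ _)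
    _ = ∑ y ∈ Finset.univ.image g, ∏ k, ∑ a, p a * densityRatio (letterLaw p g k) a (y k) := by
        simp only [Fintype.prod_sum]
    _ ≤ ∑ y ∈ Finset.univ.image g, 1 := by
        refine Finset.sum_le_sum fun y _ => Finset.prod_le_one (fun k _ => Finset.sum_nonneg
          fun a _ => mul_nonneg (hp0 a) (densityRatio_nonneg (hL0 k) _ _)) fun k _ => ?_
        simpa only [margU_letterLaw g hp1] using sum_margU_mul_densityRatio_le_one (hL0 k) (y k)
    _ = (Finset.univ.image g).card := by simp

noncomputable def averageLetterLaw (p : X → ℝ) (g : (Fin n → X) → Fin n → Y) (a : X) (b : Y) :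
    ℝ :=
  (∑ k, letterLaw p g k a b) / n

theorem averageLetterLaw_nonneg (hp0 : ∀ a, 0 ≤ p a) (a : X) (b : Y) :
    0 ≤ averageLetterLaw p g a b :=
  div_nonneg (Finset.sum_nonneg fun k _ => letterLaw_nonneg g hp0 k a b) n.cast_nonneg

theorem margU_averageLetterLaw [Fintype Y] [Nonempty (Fin n)] (hp1 : ∑ a, p a = 1) :
    margU (averageLetterLaw p g) = p := by
  have h := margU_average (margU_letterLaw g hp1)
  rwa [Fintype.card_fin] at h

theorem sum_averageLetterLaw_mul [Fintype Y] (F : X → Y → ℝ) :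
    ∑ a, ∑ b, averageLetterLaw p g a b * F a b
      = ∑ x, (∏ j, p (x j)) * (1 / (n : ℝ) * ∑ k, F (x k) (g x k)) := by
  calc ∑ a, ∑ b, averageLetterLaw p g a b * F a b
      = ∑ k, (∑ a, ∑ b, letterLaw p g k a b * F a b) / n := by
        simp only [averageLetterLaw, Finset.sum_div, div_mul_eq_mul_div, Finset.sum_mul]
        exact (Finset.sum_congr rfl fun a _ => Finset.sum_comm).trans Finset.sum_comm
    _ = ∑ x, (∏ j, p (x j)) * (1 / (n : ℝ) * ∑ k, F (x k) (g x k)) := by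
        simp only [sum_letterLaw_mul, Finset.sum_div, Finset.mul_sum]
        rw [Finset.sum_comm]
        refine Finset.sum_congr rfl fun x _ => Finset.sum_congr rfl fun k _ => ?_
        ring

theorem mutualInfo_averageLetterLaw_le [Fintype Y] [Nonempty (Fin n)] (hp0 : ∀ a, 0 ≤ p a)
    (hp1 : ∑ a, p a = 1) :
    mutualInfo (averageLetterLaw p g) ≤ logb 2 (Finset.univ.image g).card / n := by
  have h := mutualInfo_average_le (letterLaw_nonneg g hp0) (margU_letterLaw g hp1)
  rw [Fintype.card_fin] at h
  exact h.trans (div_le_div_of_nonneg_right (sum_mutualInfo_letterLaw_le g hp0 hp1) n.cast_nonneg)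

end BlockCode

theorem semantic_rate_distortion_converse_general
    {X Xhat S T : Type*} [Fintype X] [Fintype Xhat] [Fintype S] [Fintype T]
    (p : X → ℝ) (hp0 : ∀ x, 0 ≤ p x) (hp1 : ∑ x : X, p x = 1)
    (cX : X → S)
    (cT : Xhat → T)
    (d : S → T → ℝ)
    (D : ℝ)
    (R : ℝ) (hR : R < semRateDistortion p cX cT d D)
    (m : ℕ → ℕ) (hm : ∀ n : ℕ, (m n : ℝ) ≤ 2 ^ ((n : ℝ) * R))
    (φ : ∀ n, (Fin n → X) → Fin (m n)) (ψ : ∀ n, Fin (m n) → Fin n → Xhat) :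
    ∃ N : ℕ, ∀ n ≥ N,
      D < ∑ x : Fin n → X, (∏ k : Fin n, p (x k)) *
            ((1 / (n : ℝ)) * ∑ k : Fin n, d (cX (x k)) (cT (ψ n (φ n x) k))) := by
  refine ⟨1, fun n hn => ?_⟩
  by_contra! hD
  have : Nonempty X := by
    by_contra! h
    simp at hp1
  have : Nonempty (Fin n) := ⟨⟨0, hn⟩⟩
  have : Nonempty Xhat := ⟨ψ n (φ n fun _ => Classical.arbitrary X) ⟨0, hn⟩⟩
  set g : (Fin n → X) → Fin n → Xhat := fun x => ψ n (φ n x)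
  have hcard : ((Finset.univ.image g).card : ℝ) ≤ 2 ^ ((n : ℝ) * R) :=
    (Nat.cast_le.2 ((card_image_comp_le (φ n) (ψ n)).trans_eq (Fintype.card_fin _))).trans (hm n)
  have hrate : semRateDistortion p cX cT d D ≤ R := calc
    semRateDistortion p cX cT d D ≤ downSMI (averageLetterLaw p g) cX cT :=
        semRateDistortion_le_downSMI hp0 hp1 cX cT d (averageLetterLaw_nonneg g hp0)
          (margU_averageLetterLaw g hp1) (by rwa [sum_averageLetterLaw_mul])
    _ ≤ mutualInfo (averageLetterLaw p g) :=
        downSMI_le_mutualInfo (averageLetterLaw_nonneg g hp0) cX cT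
    _ ≤ logb 2 (Finset.univ.image g).card / n := mutualInfo_averageLetterLaw_le g hp0 hp1
    _ ≤ logb 2 (2 ^ ((n : ℝ) * R)) / n := by
        refine div_le_div_of_nonneg_right (logb_le_logb_of_le one_lt_two ?_ hcard) n.cast_nonneg
        exact_mod_cast Finset.card_pos.2 (Finset.univ_nonempty.image g)
    _ = R := by
        rw [logb_rpow two_pos one_lt_two.ne']
        field_simp
  linarith

/-- Semantic rate-distortion coding theorem, converse part: Let `p` be a pmf on
a finite set `X`, with partitions of `X` and `X̂` encoded by surjective class-index maps `cX`,
`cT`, a bounded semantic distortion `d_s : S × T → [0, d_max]`, and semantic rate-distortion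
function `R_s(D)` (with nonempty feasible set of test channels at distortion level `D`).
If `R < R_s(D)`, then for any sequence of codes with encoders `φ n : X^n → Fin (m n)`,
`m n ≤ 2^{nR}`, and decoders `ψ n : Fin (m n) → X̂^n`, the expected semantic distortion
`E[(1/n) Σ_k d_s(s(X_k), t(ψ_n(φ_n(X^n))_k))]` exceeds `D` for all sufficiently large `n`,
where `X_1,…,X_n` are i.i.d. with distribution `p`. -/
theorem semantic_rate_distortion_converse
    {X Xhat S T : Type*} [Fintype X] [Fintype Xhat] [Fintype S] [Fintype T]
    (p : X → ℝ) (hp0 : ∀ x, 0 ≤ p x) (hp1 : ∑ x : X, p x = 1)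
    (cX : X → S) (hcX : Function.Surjective cX)
    (cT : Xhat → T) (hcT : Function.Surjective cT)
    (d : S → T → ℝ) (dmax : ℝ) (hd0 : ∀ s t, 0 ≤ d s t) (hdmax : ∀ s t, d s t ≤ dmax)
    (D : ℝ)
    (hfeas : ∃ q : X → Xhat → ℝ, IsTestChannel q ∧
      (∑ x : X, ∑ xh : Xhat, p x * q x xh * d (cX x) (cT xh)) ≤ D)
    (R : ℝ) (hR : R < semRateDistortion p cX cT d D)
    (m : ℕ → ℕ) (hm : ∀ n : ℕ, (m n : ℝ) ≤ 2 ^ ((n : ℝ) * R))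
    (φ : ∀ n, (Fin n → X) → Fin (m n)) (ψ : ∀ n, Fin (m n) → Fin n → Xhat) :
    ∃ N : ℕ, ∀ n ≥ N,
      D < ∑ x : Fin n → X, (∏ k : Fin n, p (x k)) *
            ((1 / (n : ℝ)) * ∑ k : Fin n, d (cX (x k)) (cT (ψ n (φ n x) k))) :=
  semantic_rate_distortion_converse_general p hp0 hp1 cX cT d D R hR m hm φ ψ
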